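/- arXiv:1711.01873 — 2 statements merged into one kernel-verified Lean document; each statement's English description precedes it below -/
import Mathlib

section
/- Let (𝔛, μ) be a measure space, and let n ≥ 1, m ≥ 2 be integers. Let g : {1,…,n} × 𝔛 → ℂ and h_r : 𝔛 × 𝔛 → ℂ (r = 1,…,m−1) be measurable functions, and assume all iterated integrals appearing below converge absolutely. Define φ(i,y) = ∫_{𝔛^{m−1}} g(i,t_1) h_1(t_1,t_2) ⋯ h_{m−2}(t_{m−2},t_{m−1}) h_{m−1}(t_{m−1},y) dμ(t_1)⋯dμ(t_{m−1}). Then for every x^m = (x_1^m,…,x_n^m) ∈ 𝔛^n: ∫_{𝔛^{n(m−1)}} det[g(i, x_j^1)]_{i,j=1}^n · ∏_{r=1}^{m−1} det[h_r(x_i^r, x_j^{r+1})]_{i,j=1}^n dμ^{⊗n}(x^1)⋯dμ^{⊗n}(x^{m−1}) = (n!)^{m−1} det[φ(i, x_j^m)]_{i,j=1}^n. -/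
open MeasureTheory Finset

/-- The one-step transition chain `h_1(t_1,t_2)⋯h_{m−2}(t_{m−2},t_{m−1})h_{m−1}(t_{m−1},y)`,
as a product over `r : Fin (m-1)` where the second argument of the last factor is `y`. -/
noncomputable def transChain {X : Type*} (m : ℕ) (h : Fin (m - 1) → X → X → ℂ)
    (t : Fin (m - 1) → X) (y : X) : ℂ :=
  ∏ r : Fin (m - 1),
    h r (t r) (if hr : (r : ℕ) + 1 < m - 1 then t ⟨(r : ℕ) + 1, hr⟩ else y)

/-- `φ(i,y) = ∫_{X^{m−1}} g(i,t_1) h_1(t_1,t_2)⋯h_{m−1}(t_{m−1},y) dμ(t_1)⋯dμ(t_{m−1})`. -/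
noncomputable def phiConv {X : Type*} [MeasurableSpace X] (μ : Measure X) [SigmaFinite μ]
    (n m : ℕ) (hm : 2 ≤ m) (g : Fin n → X → ℂ) (h : Fin (m - 1) → X → X → ℂ)
    (i : Fin n) (y : X) : ℂ :=
  ∫ t : Fin (m - 1) → X, g i (t ⟨0, by omega⟩) * transChain m h t y
    ∂(Measure.pi fun _ => μ)

/-! Expand every determinant by the Leibniz formula, the `r`-th one as
`∑_{τ_r} sgn τ_r ∏_j h_r(x^r_{τ_r j}, x^{r+1}_j)`. Following the columns through the layers,
the term of `(σ, τ)` is a product over `j` of the chain `g(σ π_1 j, t_1) h_1(t_1, t_2) ⋯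
h_{m−1}(t_{m−1}, x^m_j)` along the path `t_r = x^r_{π_r j}`, where `π_r = τ_r τ_{r+1} ⋯ τ_{m−1}`.
For fixed `τ` these `n` paths are a measure-preserving rearrangement of the variables into
independent blocks, so by Fubini the term integrates to `∏_j φ(σ π_1 j, x^m_j)`. The sum over `σ`
is then `sgn π_1 · det φ = ∏_r sgn τ_r · det φ`, and the sum over `τ` yields `(n!)^{m−1}`. -/

section

variable {X : Type*} [MeasurableSpace X] {ι κ : Type*}

def rowPermTranspose (P : ι → Equiv.Perm κ) : (ι → κ → X) ≃ᵐ (κ → ι → X) :=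
  (MeasurableEquiv.curry ι κ X).symm.trans <|
    (MeasurableEquiv.piCongrLeft (fun _ => X)
      ((Equiv.prodComm κ ι).trans (Equiv.prodShear (Equiv.refl ι) P))).symm.trans
    (MeasurableEquiv.curry κ ι X)

theorem rowPermTranspose_apply (P : ι → Equiv.Perm κ) (x : ι → κ → X) (j : κ) (r : ι) :
    rowPermTranspose P x j r = x r (P r j) := by
  simp [rowPermTranspose, MeasurableEquiv.piCongrLeft]

variable [Fintype ι] [Fintype κ]

theorem measurePreserving_curry_symm (μ : Measure X) [SigmaFinite μ] :
    MeasurePreserving (MeasurableEquiv.curry ι κ X).symm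
      (Measure.pi fun _ : ι => Measure.pi fun _ : κ => μ) (Measure.pi fun _ : ι × κ => μ) := by
  refine ⟨(MeasurableEquiv.curry ι κ X).symm.measurable, (Measure.pi_eq fun s _ => ?_).symm⟩
  have hbox : (MeasurableEquiv.curry ι κ X).symm ⁻¹' Set.univ.pi s
      = Set.univ.pi fun i => Set.univ.pi fun j => s (i, j) := by
    ext x; simp
  rw [MeasurableEquiv.map_apply, hbox, Measure.pi_pi, Fintype.prod_prod_type]
  simp_rw [Measure.pi_pi]

theorem measurePreserving_rowPermTranspose (μ : Measure X) [SigmaFinite μ]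
    (P : ι → Equiv.Perm κ) :
    MeasurePreserving (rowPermTranspose P)
      (Measure.pi fun _ : ι => Measure.pi fun _ : κ => μ)
      (Measure.pi fun _ : κ => Measure.pi fun _ : ι => μ) :=
  ((measurePreserving_curry_symm μ).symm _).comp <|
    ((measurePreserving_piCongrLeft (fun _ => μ) _).symm _).comp (measurePreserving_curry_symm μ)

variable {𝕜 : Type*} [RCLike 𝕜]

theorem integrable_prod_rowPerm (μ : Measure X) [SigmaFinite μ] {F : κ → (ι → X) → 𝕜}
    (hF : ∀ j, Integrable (F j) (Measure.pi fun _ => μ)) (P : ι → Equiv.Perm κ) :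
    Integrable (fun x : ι → κ → X => ∏ j, F j fun r => x r (P r j))
      (Measure.pi fun _ => Measure.pi fun _ => μ) := by
  simp_rw [← rowPermTranspose_apply P]
  exact ((measurePreserving_rowPermTranspose μ P).integrable_comp_emb
    (rowPermTranspose P).measurableEmbedding).2 (Integrable.fintype_prod hF)

theorem integral_prod_rowPerm (μ : Measure X) [SigmaFinite μ] (F : κ → (ι → X) → 𝕜)
    (P : ι → Equiv.Perm κ) :
    ∫ x : ι → κ → X, ∏ j, F j (fun r => x r (P r j)) ∂(Measure.pi fun _ => Measure.pi fun _ => μ)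
      = ∏ j, ∫ t, F j t ∂(Measure.pi fun _ => μ) := by
  simp_rw [← rowPermTranspose_apply P]
  rw [(measurePreserving_rowPermTranspose μ P).integral_comp' (g := fun y => ∏ j, F j (y j)),
    integral_fintype_prod_eq_prod]

end

section

variable {k : ℕ}

def nextOr {α : Type*} (t : Fin k → α) (y : α) (r : Fin k) : α :=
  if hr : (r : ℕ) + 1 < k then t ⟨r + 1, hr⟩ else y

variable {G : Type*} [Monoid G]

def suffixProd (τ : Fin k → G) (r : Fin k) : G :=
  ((List.ofFn τ).drop r).prod

theorem suffixProd_eq_mul_nextOr (τ : Fin k → G) (r : Fin k) :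
    suffixProd τ r = τ r * nextOr (suffixProd τ) 1 r := by
  rw [suffixProd, List.drop_eq_getElem_cons (by simp), List.prod_cons, List.getElem_ofFn]
  unfold nextOr
  split_ifs
  · rfl
  · rw [List.drop_eq_nil_of_le (by simp; omega), List.prod_nil]

theorem map_suffixProd_zero {M F : Type*} [CommMonoid M] [FunLike F G M] [MonoidHomClass F G M]
    (f : F) (τ : Fin k → G) (hk : 0 < k) :
    f (suffixProd τ ⟨0, hk⟩) = ∏ r, f (τ r) := by
  rw [suffixProd, show ((⟨0, hk⟩ : Fin k) : ℕ) = 0 from rfl, List.drop_zero, map_list_prod,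
    List.map_ofFn, List.prod_ofFn]
  rfl

end

section

variable {X : Type*} {n k : ℕ}

theorem prod_transition_comp_suffixProd {M : Type*} [CommMonoid M] (h : X → X → M)
    (x : Fin k → Fin n → X) (y : Fin n → X) (τ : Fin k → Equiv.Perm (Fin n)) (r : Fin k) :
    ∏ j, h (x r (τ r j)) (nextOr (fun s => x s j) (y j) r)
      = ∏ j, h (x r (suffixProd τ r j)) (nextOr (fun s => x s (suffixProd τ s j)) (y j) r) := by
  rw [← Equiv.prod_comp (nextOr (suffixProd τ) 1 r)]
  refine prod_congr rfl fun j _ => ?_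
  rw [suffixProd_eq_mul_nextOr τ r, Equiv.Perm.mul_apply]
  unfold nextOr
  split_ifs <;> rfl

theorem det_mul_prod_det_transition_eq_sum {R : Type*} [CommRing R] (hk : 0 < k)
    (g : Fin n → X → R) (h : Fin k → X → X → R) (y : Fin n → X) (x : Fin k → Fin n → X) :
    (Matrix.of fun i j => g i (x ⟨0, hk⟩ j)).det *
        ∏ r, (Matrix.of fun i j => h r (x r i) (nextOr (fun s => x s j) (y j) r)).det
      = ∑ σ : Equiv.Perm (Fin n), ∑ τ : Fin k → Equiv.Perm (Fin n),
          (((Equiv.Perm.sign σ : ℤ) : R) * ∏ r, ((Equiv.Perm.sign (τ r) : ℤ) : R)) *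
            ∏ j, (fun t : Fin k → X => g (σ (suffixProd τ ⟨0, hk⟩ j)) (t ⟨0, hk⟩) *
                ∏ r, h r (t r) (nextOr t (y j) r))
              (fun s => x s (suffixProd τ s j)) := by
  simp_rw [Matrix.det_apply', Matrix.of_apply]
  rw [prod_univ_sum, sum_mul_sum, Fintype.piFinset_univ]
  refine sum_congr rfl fun σ _ => sum_congr rfl fun τ _ => ?_
  rw [prod_mul_distrib, mul_mul_mul_comm, prod_mul_distrib]
  simp_rw [prod_transition_comp_suffixProd]
  rw [prod_comm (s := univ) (t := univ) (f := fun r j => h r _ _),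
    ← Equiv.prod_comp (suffixProd τ ⟨0, hk⟩) fun j => g (σ j) (x ⟨0, hk⟩ j)]

theorem sum_sign_mul_prod_suffixProd {R : Type*} [CommRing R] (hk : 0 < k)
    (M : Fin n → Fin n → R) :
    ∑ σ : Equiv.Perm (Fin n), ∑ τ : Fin k → Equiv.Perm (Fin n),
        (((Equiv.Perm.sign σ : ℤ) : R) * ∏ r, ((Equiv.Perm.sign (τ r) : ℤ) : R)) *
          ∏ j, M (σ (suffixProd τ ⟨0, hk⟩ j)) j
      = (n.factorial : R) ^ k * (Matrix.of M).det := by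
  have hdet : ∀ π : Equiv.Perm (Fin n),
      ∑ σ : Equiv.Perm (Fin n), ((Equiv.Perm.sign σ : ℤ) * (Equiv.Perm.sign π : ℤ) : R) *
        ∏ j, M (σ (π j)) j = (Matrix.of M).det := by
    intro π
    rw [Matrix.det_apply']
    refine Fintype.sum_equiv (Equiv.mulRight π) _ _ fun σ => ?_
    simp only [Equiv.coe_mulRight, Equiv.Perm.mul_apply, Equiv.Perm.sign_mul, Units.val_mul,
      Int.cast_mul, Matrix.of_apply]
  rw [Finset.sum_comm]
  have hsign : ∀ τ : Fin k → Equiv.Perm (Fin n),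
      ∏ r, ((Equiv.Perm.sign (τ r) : ℤ) : R) = (Equiv.Perm.sign (suffixProd τ ⟨0, hk⟩) : ℤ) := by
    intro τ
    rw [map_suffixProd_zero, Units.coe_prod, Int.cast_prod]
  simp_rw [hsign, hdet, sum_const, card_univ, Fintype.card_fun, Fintype.card_perm,
    Fintype.card_fin, nsmul_eq_mul]
  push_cast
  ring

end

/-- Iterated Andréief identity: integrating out the first `m−1` levels of a product of
determinants of one-step transition functions gives `(n!)^{m−1} det[φ(i, x_j^m)]`. -/
theorem iterated_andreief {X : Type*} [MeasurableSpace X] (μ : Measure X) [SigmaFinite μ]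
    (n m : ℕ) (hm : 2 ≤ m)
    (g : Fin n → X → ℂ) (h : Fin (m - 1) → X → X → ℂ)
    (hφ : ∀ (i : Fin n) (y : X),
      Integrable (fun t : Fin (m - 1) → X => g i (t ⟨0, by omega⟩) * transChain m h t y)
        (Measure.pi fun _ => μ))
    (xm : Fin n → X) :
    (∫ x : Fin (m - 1) → Fin n → X,
        (Matrix.of fun i j : Fin n => g i (x ⟨0, by omega⟩ j)).det *
          ∏ r : Fin (m - 1),
            (Matrix.of fun i j : Fin n =>
              h r (x r i) (if hr : (r : ℕ) + 1 < m - 1 then x ⟨(r : ℕ) + 1, hr⟩ j else xm j)).det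
        ∂(Measure.pi fun _ => Measure.pi fun _ => μ))
      = ((n.factorial : ℂ)) ^ (m - 1) *
        (Matrix.of fun i j : Fin n => phiConv μ n m hm g h i (xm j)).det := by
  have hk : 0 < m - 1 := by omega
  let F (σ : Equiv.Perm (Fin n)) (τ : Fin (m - 1) → Equiv.Perm (Fin n)) (j : Fin n)
      (t : Fin (m - 1) → X) : ℂ :=
    g (σ (suffixProd τ ⟨0, hk⟩ j)) (t ⟨0, hk⟩) * ∏ r, h r (t r) (nextOr t (xm j) r)
  have hterm σ τ : Integrable (fun x : Fin (m - 1) → Fin n → X =>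
      ∏ j, F σ τ j fun s => x s (suffixProd τ s j)) (Measure.pi fun _ => Measure.pi fun _ => μ) :=
    integrable_prod_rowPerm μ (fun j => hφ _ _) _
  -- `nextOr` unfolds to the `if` of the statement and of `transChain`.
  refine (integral_congr_ae (ae_of_all _ fun x =>
    det_mul_prod_det_transition_eq_sum hk g h xm x)).trans ?_
  rw [integral_finsetSum _ fun σ _ => integrable_finsetSum _ fun τ _ => (hterm σ τ).const_mul _]
  refine (sum_congr rfl fun σ _ => ?_).trans
    (sum_sign_mul_prod_suffixProd hk fun i j => phiConv μ n m hm g h i (xm j))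
  rw [integral_finsetSum _ fun τ _ => (hterm σ τ).const_mul _]
  refine sum_congr rfl fun τ _ => ?_
  rw [integral_const_mul]
  exact congrArg _ (integral_prod_rowPerm μ (F σ τ) _)
end

section
/- Let N ≥ 1 be an integer and ν > −1 a real number. Define the Hankel matrix H = (h_{k+l})_{k,l=0}^{N−1} with h_k = Γ(k+ν+1), and define α = (α_{k,l})_{k,l=0}^{N−1} by α_{k,l} = ∑_{p=0}^{N−1} Γ(ν+p+1) (−p)_k (−p)_l / (p! Γ(ν+k+1) Γ(ν+l+1) k! l!). Then α is the inverse of H, i.e. ∑_{l=0}^{N−1} Γ(k+l+ν+1) α_{l,j} = δ_{k,j} for all k,j ∈ {0,…,N−1}. -/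
/-!
Put `x = ν + 1` and `A_{p,l} = (-p)_l / (l! Γ(x+l))`, so that `α = Aᵀ D A` with
`D = diag(Γ(x+p)/p!)`. Since `Γ(x+k+l) / Γ(x+l) = (x+l)_k` and `(-p)_l / l! = (-1)^l C(p,l)`,
the sum over `l` in `(H Aᵀ)_{k,p}` is `(-1)^p` times the `p`-th forward difference of
`y ↦ (y)_k` at `x`, i.e. `(-1)^p k!/(k-p)! (x+p)_{k-p}`; hence
`(H Aᵀ D)_{k,p} = (-1)^p C(k,p) Γ(x+k)`.
The remaining sum over `p` is binomial inversion, `∑_p (-1)^p C(k,p) (-p)_j / j! = δ_{k,j}`.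
-/

open Finset

/-- The Pochhammer symbol `(a)_k = a(a+1)⋯(a+k−1)`, with `(a)_0 = 1`. -/
noncomputable def poch (a : ℝ) (k : ℕ) : ℝ := ∏ i ∈ Finset.range k, (a + i)

open Function fwdDiff
open scoped Nat

lemma poch_zero (a : ℝ) : poch a 0 = 1 := by simp [poch]

lemma poch_succ (a : ℝ) (n : ℕ) : poch a (n + 1) = poch a n * (a + n) :=
  prod_range_succ _ _

lemma poch_succ' (a : ℝ) (n : ℕ) : poch a (n + 1) = a * poch (a + 1) n := by
  rw [poch, prod_range_succ', Nat.cast_zero, add_zero, mul_comm, poch]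
  congr 1
  refine prod_congr rfl fun i _ => ?_
  push_cast
  ring

lemma poch_neg_natCast (p l : ℕ) : poch (-(p : ℝ)) l = (-1) ^ l * l ! * p.choose l := by
  rw [mul_assoc, ← Nat.cast_mul, ← Nat.descFactorial_eq_factorial_mul_choose]
  induction l with
  | zero => simp [poch_zero]
  | succ l ih =>
    rw [poch_succ, ih, Nat.descFactorial_succ, pow_succ]
    rcases le_or_gt l p with h | h
    · push_cast [Nat.cast_sub h]
      ring
    · simp [Nat.descFactorial_of_lt h]

lemma Real.Gamma_add_natCast_eq_mul_poch {x : ℝ} (hx : ∀ m : ℕ, x ≠ -m) (n : ℕ) :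
    Gamma (x + n) = Gamma x * poch x n := by
  induction n with
  | zero => simp [poch_zero]
  | succ n ih =>
    have hxn : x + n ≠ 0 := fun h => hx n (eq_neg_of_add_eq_zero_left h)
    rw [Nat.cast_succ, ← add_assoc, Gamma_add_one hxn, ih, poch_succ]
    ring

lemma fwdDiff_poch_succ (k : ℕ) :
    Δ_[1] (fun y : ℝ => poch y (k + 1)) = fun y => (k + 1) * poch (y + 1) k := by
  ext y
  rw [fwdDiff, poch_succ, poch_succ']
  ring

lemma fwdDiff_iter_poch (p k : ℕ) :
    Δ_[1] ^[p] (fun y : ℝ => poch y k) = fun y => k.descFactorial p * poch (y + p) (k - p) := by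
  induction p generalizing k with
  | zero => simp
  | succ p ih =>
    rw [iterate_succ_apply]
    cases k with
    | zero =>
      simp only [poch_zero, fwdDiff_const, iterate_fixed (fwdDiff_const (1 : ℝ) (0 : ℝ)),
        Nat.zero_descFactorial_succ, Nat.cast_zero, zero_mul]
    | succ m =>
      rw [fwdDiff_poch_succ]
      change Δ_[1] ^[p] (((m : ℝ) + 1) • fun y => poch (y + 1) m) = _
      ext y
      simp only [fwdDiff_iter_const_smul, Pi.smul_apply,
        fwdDiff_iter_comp_add (f := fun y : ℝ => poch y m), ih]
      rw [Nat.succ_descFactorial_succ, Nat.add_sub_add_right, smul_eq_mul]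
      push_cast
      ring_nf

lemma sum_neg_one_pow_mul_choose_mul_eq_fwdDiff_iter {M R : Type*} [AddCommMonoid M]
    [CommRing R] (h : M) (f : M → R) (n : ℕ) (y : M) :
    ∑ l ∈ range (n + 1), (-1) ^ l * n.choose l * f (y + l • h)
      = (-1) ^ n * Δ_[h] ^[n] f y := by
  rw [fwdDiff_iter_eq_sum_shift, mul_sum]
  refine sum_congr rfl fun l hl => ?_
  obtain ⟨m, rfl⟩ := Nat.exists_eq_add_of_le (Nat.lt_succ_iff.1 (mem_range.1 hl))
  rw [Nat.add_sub_cancel_left, zsmul_eq_mul, pow_add]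
  push_cast
  have hsq : (-1 : R) ^ (m + m) = 1 := Even.neg_one_pow ⟨m, rfl⟩
  linear_combination -(-1 : R) ^ l * (l + m).choose l * f (y + l • h) * hsq

lemma sum_neg_one_pow_mul_choose_mul_choose (k j : ℕ) :
    ∑ p ∈ range (k + 1), (-1 : ℤ) ^ p * k.choose p * p.choose j
      = if k = j then (-1) ^ k else 0 := by
  have := sum_neg_one_pow_mul_choose_mul_eq_fwdDiff_iter 1 (fun x : ℕ => (x.choose j : ℤ)) k 0
  simp only [zero_add, smul_eq_mul, mul_one, fwdDiff_iter_choose_zero] at this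
  rw [this]
  split_ifs <;> simp

lemma sum_neg_one_pow_mul_choose_mul_poch (k p : ℕ) (y : ℝ) :
    ∑ l ∈ range (p + 1), (-1) ^ l * p.choose l * poch (y + l) k
      = (-1) ^ p * k.descFactorial p * poch (y + p) (k - p) := by
  have := sum_neg_one_pow_mul_choose_mul_eq_fwdDiff_iter 1 (fun y : ℝ => poch y k) p y
  simp only [nsmul_eq_mul, mul_one, fwdDiff_iter_poch] at this
  rw [this, mul_assoc]

lemma sum_neg_one_pow_mul_choose_mul_poch_neg_div_factorial {k N : ℕ} (hk : k < N) (j : ℕ) :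
    ∑ p ∈ range N, (-1) ^ p * k.choose p * poch (-(p : ℝ)) j / j !
      = if k = j then 1 else 0 := by
  rw [← sum_subset (range_subset_range.2 hk) fun p _ hp => by
    rw [Nat.choose_eq_zero_of_lt (by simpa using hp)]; simp]
  have hterm : ∀ p ∈ range (k + 1), (-1) ^ p * k.choose p * poch (-(p : ℝ)) j / j !
      = (-1) ^ j * (((-1 : ℤ) ^ p * k.choose p * p.choose j : ℤ) : ℝ) := fun p _ => by
    rw [poch_neg_natCast]
    push_cast
    field_simp
  rw [sum_congr rfl hterm, ← mul_sum, ← Int.cast_sum, sum_neg_one_pow_mul_choose_mul_choose]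
  split_ifs with h
  · subst h
    push_cast
    rw [← pow_add, Even.neg_one_pow ⟨k, rfl⟩]
  · simp

section

variable {x : ℝ} (hx : ∀ m : ℕ, x ≠ -m)
include hx

lemma add_natCast_ne_neg_natCast (n : ℕ) : ∀ m : ℕ, x + n ≠ -m := fun m h =>
  hx (n + m) (by push_cast; linarith)

lemma Gamma_div_factorial_mul_sum_Gamma_mul_poch_neg {p N : ℕ} (hp : p < N) (k : ℕ) :
    Real.Gamma (x + p) / p ! *
        ∑ l ∈ range N, Real.Gamma (x + k + l) * poch (-(p : ℝ)) l / (l ! * Real.Gamma (x + l))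
      = (-1) ^ p * k.choose p * Real.Gamma (x + k) := by
  have hterm : ∀ l ∈ range N,
      Real.Gamma (x + k + l) * poch (-(p : ℝ)) l / (l ! * Real.Gamma (x + l))
        = (-1) ^ l * p.choose l * poch (x + l) k := fun l _ => by
    have hxl := add_natCast_ne_neg_natCast hx l
    have hG := Real.Gamma_ne_zero hxl
    rw [add_right_comm, Real.Gamma_add_natCast_eq_mul_poch hxl, poch_neg_natCast]
    field_simp
  rw [sum_congr rfl hterm, ← sum_subset (range_subset_range.2 hp) fun l _ hl => by
    rw [Nat.choose_eq_zero_of_lt (by simpa using hl)]; simp,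
    sum_neg_one_pow_mul_choose_mul_poch]
  rcases le_or_gt p k with hpk | hkp
  · obtain ⟨n, rfl⟩ := Nat.exists_eq_add_of_le hpk
    rw [Nat.add_sub_cancel_left, Nat.descFactorial_eq_factorial_mul_choose, Nat.cast_add,
      ← add_assoc, Real.Gamma_add_natCast_eq_mul_poch (add_natCast_ne_neg_natCast hx p) n]
    push_cast
    field_simp
  · simp [Nat.descFactorial_of_lt hkp, Nat.choose_eq_zero_of_lt hkp]

lemma sum_Gamma_mul_sum_Gamma_mul_poch_neg {N k : ℕ} (hk : k < N) (j : ℕ) :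
    ∑ l ∈ range N, Real.Gamma (x + k + l) *
        ∑ p ∈ range N, Real.Gamma (x + p) * poch (-(p : ℝ)) l * poch (-(p : ℝ)) j /
          (p ! * Real.Gamma (x + l) * Real.Gamma (x + j) * l ! * j !)
      = if k = j then 1 else 0 := by
  have hGj := Real.Gamma_ne_zero (add_natCast_ne_neg_natCast hx j)
  calc _ = ∑ p ∈ range N, (Real.Gamma (x + p) / p ! * ∑ l ∈ range N,
            Real.Gamma (x + k + l) * poch (-(p : ℝ)) l / (l ! * Real.Gamma (x + l))) *
          (poch (-(p : ℝ)) j / (j ! * Real.Gamma (x + j))) := by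
        simp only [mul_sum, sum_mul]
        rw [sum_comm]
        refine sum_congr rfl fun p _ => sum_congr rfl fun l _ => ?_
        ring
    _ = Real.Gamma (x + k) / Real.Gamma (x + j) *
          ∑ p ∈ range N, (-1) ^ p * k.choose p * poch (-(p : ℝ)) j / j ! := by
        rw [mul_sum]
        refine sum_congr rfl fun p hp => ?_
        rw [Gamma_div_factorial_mul_sum_Gamma_mul_poch_neg hx (mem_range.1 hp)]
        field_simp
    _ = _ := by
        rw [sum_neg_one_pow_mul_choose_mul_poch_neg_div_factorial hk]
        split_ifs with h
        · subst h
          exact mul_one _ |>.trans (div_self hGj)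
        · exact mul_zero _

end

theorem hankel_gamma_inverse_general (N : ℕ) (ν : ℝ) (hν : -1 < ν)
    (k j : Fin N) :
    ∑ l : Fin N, Real.Gamma ((k : ℕ) + (l : ℕ) + ν + 1) *
        (∑ p ∈ Finset.range N,
          Real.Gamma (ν + p + 1) * poch (-(p : ℝ)) (l : ℕ) * poch (-(p : ℝ)) (j : ℕ) /
            ((Nat.factorial p : ℝ) * Real.Gamma (ν + (l : ℕ) + 1) *
              Real.Gamma (ν + (j : ℕ) + 1) *
              (Nat.factorial (l : ℕ) : ℝ) * (Nat.factorial (j : ℕ) : ℝ)))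
      = if k = j then 1 else 0 := by
  have hx : ∀ m : ℕ, ν + 1 ≠ -m := fun m h => by
    have := m.cast_nonneg (α := ℝ)
    linarith
  have key := sum_Gamma_mul_sum_Gamma_mul_poch_neg hx k.isLt j
  rw [← Fin.sum_univ_eq_sum_range] at key
  simp only [Fin.val_inj] at key
  have harg₂ : ∀ a b : ℝ, a + b + ν + 1 = ν + 1 + a + b := fun a b => by ring
  have harg₁ : ∀ a : ℝ, ν + a + 1 = ν + 1 + a := fun a => by ring
  simpa only [harg₂, harg₁] using key

/-- Let `N ≥ 1` and `ν > −1`.  The matrix `α` with entries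
`α_{k,l} = ∑_{p=0}^{N−1} Γ(ν+p+1)(−p)_k(−p)_l / (p! Γ(ν+k+1) Γ(ν+l+1) k! l!)`
is the inverse of the Hankel matrix `(Γ(k+l+ν+1))_{k,l=0}^{N−1}`, i.e.
`∑_{l=0}^{N−1} Γ(k+l+ν+1) α_{l,j} = δ_{k,j}`. -/
theorem hankel_gamma_inverse (N : ℕ) (hN : 1 ≤ N) (ν : ℝ) (hν : -1 < ν)
    (k j : Fin N) :
    ∑ l : Fin N, Real.Gamma ((k : ℕ) + (l : ℕ) + ν + 1) *
        (∑ p ∈ Finset.range N,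
          Real.Gamma (ν + p + 1) * poch (-(p : ℝ)) (l : ℕ) * poch (-(p : ℝ)) (j : ℕ) /
            ((Nat.factorial p : ℝ) * Real.Gamma (ν + (l : ℕ) + 1) *
              Real.Gamma (ν + (j : ℕ) + 1) *
              (Nat.factorial (l : ℕ) : ℝ) * (Nat.factorial (j : ℕ) : ℝ)))
      = if k = j then 1 else 0 :=
  hankel_gamma_inverse_general N ν hν k j
end
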